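/- arXiv:2106.07621 — 2 statements merged into one kernel-verified Lean document; each statement's English description precedes it below -/
import Mathlib

section
/- Let f be a polynomial with rational coefficients of degree d. Then for every rational n, I_f(n) = S_f(n) + ∑_{r=1}^{d+1} G_r · (Δ^{r−1} f(n) − Δ^{r−1} f(0)), where I_f is the antiderivative of f with I_f(0) = 0 (so I_f(n) = ∫_0^n f(t) dt), Δ is the unit-step forward difference operator, and G_r are the Gregory coefficients. (This is Gregory's quadrature formula for polynomials, obtained as the x → 0⁺ case of the generalized summation formula.) -/
/-- The unit-step forward difference operator `Δ f(t) = f(t+1) - f(t)` on polynomials. -/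
noncomputable def fdiff (p : Polynomial ℚ) : Polynomial ℚ :=
  p.comp (Polynomial.X + 1) - p

/-!
Differentiating Newton's forward difference formula `p (x + t) = ∑ₖ Δᵏ p (x) * (t choose k)`
at `t = 0` gives `D = log (1 + Δ) = Δ L(Δ)` on polynomials, where `D` is the derivative and
`L(z) = log (1 + z) / z = ∑ₖ (-1)ᵏ zᵏ / (k + 1)`; all these series truncate because `Δ` lowers
degrees. As `G L = 1`, the polynomial `T = ∑ᵣ Gᵣ Δʳ S` has `T' = Δ S = f = I'`, so `I - T` is
constant, and `T = S + ∑_{r ≥ 1} Gᵣ Δ^{r-1} f` since `G₀ = 1`.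
-/

open Polynomial Finset
open scoped Nat

noncomputable def fdiffₗ : Module.End ℚ ℚ[X] where
  toFun := fdiff
  map_add' p q := by simp only [fdiff, add_comp]; abel
  map_smul' c p := by simp only [fdiff, smul_comp, RingHom.id_apply, smul_sub]

lemma fdiffₗ_apply (p : ℚ[X]) : fdiffₗ p = fdiff p := rfl

lemma fdiffₗ_pow_apply (k : ℕ) (p : ℚ[X]) : (fdiffₗ ^ k) p = fdiff^[k] p := by
  rw [Module.End.pow_apply]; rfl

lemma eval_fdiff (p : ℚ[X]) : (fdiff p).eval = fwdDiff 1 p.eval := by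
  ext x; simp [fdiff, fwdDiff]

lemma eval_iterate_fdiff (k : ℕ) (p : ℚ[X]) (x : ℚ) :
    (fdiff^[k] p).eval x = (fwdDiff 1)^[k] p.eval x := by
  induction k generalizing p with
  | zero => rfl
  | succ k ih => rw [Function.iterate_succ_apply, ih, eval_fdiff, Function.iterate_succ_apply]

lemma iterate_fdiff_eq_zero_of_natDegree_lt {p : ℚ[X]} {k : ℕ} (hp : p.natDegree < k) :
    fdiff^[k] p = 0 :=
  Polynomial.funext fun x => by
    rw [eval_iterate_fdiff, fwdDiff_iter_eq_zero_of_degree_lt hp, eval_zero, Pi.zero_apply]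

lemma natDegree_le_natDegree_fdiff_add_one (p : ℚ[X]) :
    p.natDegree ≤ (fdiff p).natDegree + 1 := by
  by_contra! h
  obtain ⟨m, hm⟩ : ∃ m, p.natDegree = m + 1 := Nat.exists_eq_add_one.mpr (by omega)
  have hp : p ≠ 0 := by rintro rfl; simp at hm
  have hvanish : fdiff^[p.natDegree] p = 0 := by
    rw [hm, Function.iterate_succ_apply]
    exact iterate_fdiff_eq_zero_of_natDegree_lt (by omega)
  have := congrFun p.fwdDiff_iter_degree_eq_factorial 0
  rw [← eval_iterate_fdiff, hvanish] at this
  simp [hp, Nat.factorial_ne_zero] at this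

lemma derivative_fdiff (p : ℚ[X]) : derivative (fdiff p) = fdiff (derivative p) := by
  simp [fdiff, derivative_comp]

lemma eval_zero_derivative_descPochhammer_succ {R : Type*} [CommRing R] (k : ℕ) :
    (derivative (descPochhammer R (k + 1))).eval 0 = (-1) ^ k * k ! := by
  rw [descPochhammer_succ_left, derivative_mul, derivative_X, one_mul, eval_add, eval_mul,
    eval_X, zero_mul, add_zero, eval_comp, eval_sub, eval_X, eval_one, zero_sub,
    descPochhammer_eval_eq_prod_range]
  induction k with
  | zero => simp
  | succ k ih => rw [prod_range_succ, ih, Nat.factorial_succ]; push_cast; ring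

theorem comp_X_add_C_eq_sum_descPochhammer {p : ℚ[X]} {N : ℕ} (hp : p.natDegree < N) (x : ℚ) :
    p.comp (X + C x) = ∑ k ∈ range N, C ((fdiff^[k] p).eval x / k !) * descPochhammer ℚ k := by
  refine eq_of_infinite_eval_eq _ _ <| Set.Infinite.mono ?_ <|
    Set.infinite_range_of_injective (f := fun m : ℕ => ((N + m : ℕ) : ℚ)) fun a b h => by
      simpa using h
  rintro _ ⟨m, rfl⟩
  have hnewton := shift_eq_sum_fwdDiff_iter 1 p.eval (N + m) x
  rw [← sum_subset (range_subset_range.mpr (by omega : N ≤ N + m + 1))] at hnewton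
  · simp only [Set.mem_ofPred_eq, eval_comp, eval_add, eval_X, eval_C, eval_finsetSum, eval_mul]
    rw [add_comm, ← nsmul_one, hnewton]
    refine sum_congr rfl fun k _ => ?_
    rw [nsmul_eq_mul, Nat.cast_choose_eq_descPochhammer_div, eval_iterate_fdiff]
    push_cast
    ring_nf
  · intro k _ hk
    rw [← eval_iterate_fdiff, iterate_fdiff_eq_zero_of_natDegree_lt (by simp at hk; omega),
      eval_zero, smul_zero]

theorem derivative_eq_sum_iterate_fdiff {p : ℚ[X]} {N : ℕ} (hp : p.natDegree ≤ N) :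
    derivative p = ∑ k ∈ range N, ((-1) ^ k / (k + 1) : ℚ) • fdiff^[k + 1] p := by
  refine Polynomial.funext fun x => ?_
  have h := congrArg (fun q => (derivative q).eval 0)
    (comp_X_add_C_eq_sum_descPochhammer (Nat.lt_succ_of_le hp) x)
  simp only [derivative_comp, derivative_add, derivative_X, derivative_C, add_zero, one_mul,
    eval_comp, eval_add, eval_X, eval_C, zero_add, derivative_sum, derivative_C_mul,
    eval_finsetSum, eval_mul] at h
  rw [h, sum_range_succ', descPochhammer_zero, derivative_one, eval_zero, mul_zero, add_zero,
    eval_finsetSum]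
  refine sum_congr rfl fun k _ => ?_
  rw [eval_zero_derivative_descPochhammer_succ, eval_smul, smul_eq_mul, Nat.factorial_succ]
  push_cast
  field_simp

noncomputable def logOneAddDivX : PowerSeries ℚ :=
  PowerSeries.mk fun r => (-1) ^ r / ((r : ℚ) + 1)

lemma aeval_trunc_apply {R M : Type*} [CommSemiring R] [AddCommMonoid M] [Module R M]
    (f : Module.End R M) (F : PowerSeries R) (N : ℕ) (v : M) :
    aeval f (PowerSeries.trunc N F) v = ∑ k ∈ range N, PowerSeries.coeff k F • (f ^ k) v := by
  rw [aeval_def, PowerSeries.eval₂_trunc_eq_sum_range, LinearMap.sum_apply]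
  simp [Module.End.mul_apply, Module.algebraMap_end_apply]

lemma aeval_apply_eq_zero_of_X_pow_dvd {R M : Type*} [CommSemiring R] [AddCommMonoid M]
    [Module R M] {f : Module.End R M} {P : R[X]} {N : ℕ} {v : M} (hP : X ^ N ∣ P)
    (hv : (f ^ N) v = 0) : aeval f P v = 0 := by
  obtain ⟨Q, rfl⟩ := hP
  rw [mul_comm, map_mul, map_pow, aeval_X, Module.End.mul_apply, hv, map_zero]

lemma X_pow_dvd_trunc_mul_trunc_sub_one {R : Type*} [CommRing R] {F H : PowerSeries R}
    (h : F * H = 1) (N : ℕ) :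
    X ^ N ∣ PowerSeries.trunc N F * PowerSeries.trunc N H - 1 := by
  refine X_pow_dvd_iff.mpr fun d hd => ?_
  rw [coeff_sub, ← Polynomial.coeff_coe, Polynomial.coe_mul,
    ← PowerSeries.coeff_mul_eq_coeff_trunc_mul_trunc _ _ hd, h, ← Polynomial.coeff_coe,
    Polynomial.coe_one, sub_self]

theorem derivative_sum_smul_iterate_fdiff {G : ℕ → ℚ}
    (hG : PowerSeries.mk G * logOneAddDivX = 1) {p : ℚ[X]} {N : ℕ} (hp : p.natDegree ≤ N) :
    derivative (∑ r ∈ range N, G r • fdiff^[r] p) = fdiff p := by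
  have hsum : ∀ q, ∑ r ∈ range N, G r • fdiff^[r] q =
      aeval fdiffₗ (PowerSeries.trunc N (PowerSeries.mk G)) q := fun q => by
    simp [aeval_trunc_apply, fdiffₗ_pow_apply]
  have hlog : derivative p = aeval fdiffₗ (X * PowerSeries.trunc N logOneAddDivX) p := by
    rw [derivative_eq_sum_iterate_fdiff hp, map_mul, aeval_X, Module.End.mul_apply,
      aeval_trunc_apply, map_sum]
    simp [logOneAddDivX, fdiffₗ_apply, fdiffₗ_pow_apply, Function.iterate_succ_apply']
  have hkill : (fdiffₗ ^ (N + 1)) p = 0 := by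
    rw [fdiffₗ_pow_apply, iterate_fdiff_eq_zero_of_natDegree_lt (by omega)]
  calc derivative (∑ r ∈ range N, G r • fdiff^[r] p)
      = ∑ r ∈ range N, G r • fdiff^[r] (derivative p) := by
        simp [(Function.Commute.iterate_right derivative_fdiff _ _)]
    _ = aeval fdiffₗ (PowerSeries.trunc N (PowerSeries.mk G) * (X * PowerSeries.trunc N logOneAddDivX)) p := by
        rw [hsum, hlog, ← Module.End.mul_apply, ← map_mul]
    _ = aeval fdiffₗ X p + aeval fdiffₗ
          (X * (PowerSeries.trunc N (PowerSeries.mk G) * PowerSeries.trunc N logOneAddDivX - 1)) p := by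
        rw [← LinearMap.add_apply, ← map_add]; ring_nf
    _ = fdiff p := by
        have hdvd : X ^ (N + 1) ∣
            X * (PowerSeries.trunc N (PowerSeries.mk G) * PowerSeries.trunc N logOneAddDivX - 1) := by
          rw [pow_succ']; exact mul_dvd_mul_left X (X_pow_dvd_trunc_mul_trunc_sub_one hG N)
        rw [aeval_apply_eq_zero_of_X_pow_dvd hdvd hkill, aeval_X, add_zero, fdiffₗ_apply]

lemma eval_sub_eval_eq_of_derivative_eq {R : Type*} [CommRing R] [IsAddTorsionFree R] {p q : R[X]}
    (h : derivative p = derivative q) (x y : R) :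
    p.eval x - p.eval y = q.eval x - q.eval y := by
  have hconst := eq_C_of_derivative_eq_zero (p := p - q) (by rw [derivative_sub, h, sub_self])
  have hx := congrArg (eval x) hconst
  have hy := congrArg (eval y) hconst
  simp only [eval_sub, eval_C] at hx hy
  linear_combination hx - hy

/-- **Gregory's quadrature formula for polynomials**: if `f` has degree `d`, `S` is the
fractional sum of `f`, `I` is the antiderivative of `f` with `I(0) = 0`, and `G_r` are the
Gregory coefficients (the coefficients of `z/log(1+z)`, i.e. of the multiplicative inverse of
`∑_{r≥0} ((-1)^r/(r+1)) z^r`), then for every rational `n`,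
`I(n) = S(n) + ∑_{r=1}^{d+1} G_r (Δ^{r-1} f(n) - Δ^{r-1} f(0))`. -/
theorem gregory_quadrature_for_polynomials
    (G : ℕ → ℚ)
    (hG : PowerSeries.mk G *
        PowerSeries.mk (fun r => ((-1) ^ r / ((r : ℚ) + 1) : ℚ)) = 1)
    (f : Polynomial ℚ) (d : ℕ) (hd : f.natDegree = d)
    (S : Polynomial ℚ) (hS0 : S.eval 0 = 0)
    (hS : S.comp (Polynomial.X + 1) - S = f)
    (I : Polynomial ℚ) (hI0 : I.eval 0 = 0) (hI : I.derivative = f)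
    (n : ℚ) :
    I.eval n = S.eval n +
      ∑ r ∈ Finset.Icc 1 (d + 1),
        G r * ((fdiff^[r - 1] f).eval n - (fdiff^[r - 1] f).eval 0) := by
  have hΔS : fdiff S = f := hS
  have hG0 : G 0 = 1 := by simpa using congrArg (PowerSeries.coeff 0) hG
  have hSdeg : S.natDegree ≤ d + 2 := by
    have := natDegree_le_natDegree_fdiff_add_one S
    rw [hΔS, hd] at this
    omega
  have hT : ∑ r ∈ range (d + 2), G r • fdiff^[r] S =
      S + ∑ r ∈ Icc 1 (d + 1), G r • fdiff^[r - 1] f := by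
    rw [sum_range_succ', hG0, one_smul, add_comm, ← Ico_add_one_right_eq_Icc, sum_Ico_eq_sum_range]
    simp [add_comm 1, Function.iterate_succ_apply, hΔS]
  have hder : derivative I = derivative (S + ∑ r ∈ Icc 1 (d + 1), G r • fdiff^[r - 1] f) := by
    rw [hI, ← hT, derivative_sum_smul_iterate_fdiff hG hSdeg, hΔS]
  have := eval_sub_eval_eq_of_derivative_eq hder n 0
  simp only [hS0, hI0, eval_add, eval_finsetSum, eval_smul, smul_eq_mul] at this
  simp only [mul_sub, sum_sub_distrib]
  linarith
end

section
/- Let f be a polynomial with rational coefficients of degree d. Then for every even natural number n, ∑_{k=0}^{n−1} (−1)^k f(k) = ∑_{r=1}^{d+1} ((−1)^r/2^r) · (Δ^{r−1} f(n) − Δ^{r−1} f(0)), where Δ is the unit-step forward difference operator. (This is Euler's summation method for alternating sums, obtained as the x = 2 case of the generalized summation formula.) -/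
open Polynomial Finset

lemma fdiff_eval (p : Polynomial ℚ) (x : ℚ) :
    (fdiff p).eval x = p.eval (x + 1) - p.eval x := by
  simp [fdiff, eval_comp]

lemma natDegree_fdiff_le (p : Polynomial ℚ) (d : ℕ) (h : p.natDegree ≤ d + 1) :
    (fdiff p).natDegree ≤ d := by
  rcases eq_or_ne p.natDegree 0 with h0 | h0
  · obtain ⟨c, rfl⟩ := natDegree_eq_zero.mp h0
    simp [fdiff]
  · have hp : p ≠ 0 := fun hh => h0 (by simp [hh])
    have hq : (Polynomial.X + 1 : Polynomial ℚ).natDegree = 1 := by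
      simpa using Polynomial.natDegree_X_add_C (1 : ℚ)
    have hlc : (p.comp (Polynomial.X + 1)).leadingCoeff = p.leadingCoeff := by
      rw [Polynomial.leadingCoeff_comp (by rw [hq]; norm_num)]
      have : (Polynomial.X + 1 : Polynomial ℚ).leadingCoeff = 1 := by
        simpa using Polynomial.leadingCoeff_X_add_C (1 : ℚ)
      simp [this]
    have hcomp_ne : p.comp (Polynomial.X + 1) ≠ 0 := by
      intro hh
      apply hp
      have := hlc
      rw [hh] at this
      simp at this
      exact leadingCoeff_eq_zero.mp this.symm
    have hnd : (p.comp (Polynomial.X + 1)).natDegree = p.natDegree := by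
      rw [Polynomial.natDegree_comp, hq, mul_one]
    have hdeg : (p.comp (Polynomial.X + 1)).degree = p.degree := by
      rw [degree_eq_natDegree hcomp_ne, degree_eq_natDegree hp, hnd]
    have hlt : (fdiff p).degree < p.degree := by
      have := Polynomial.degree_sub_lt hdeg hcomp_ne hlc
      rwa [hdeg] at this
    rcases eq_or_ne (fdiff p) 0 with hz | hz
    · simp [hz]
    · have : (fdiff p).natDegree < p.natDegree :=
        Polynomial.natDegree_lt_natDegree hz hlt
      omega

lemma fdiff_iter_zero : ∀ (d : ℕ) (p : Polynomial ℚ), p.natDegree ≤ d → fdiff^[d + 1] p = 0 := by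
  intro d
  induction d with
  | zero =>
    intro p hp
    obtain ⟨c, rfl⟩ := natDegree_eq_zero.mp (Nat.le_zero.mp hp)
    simp [fdiff]
  | succ d ih =>
    intro p hp
    rw [Function.iterate_succ_apply]
    exact ih (fdiff p) (natDegree_fdiff_le p d hp)

lemma euler_key (f : Polynomial ℚ) (n : ℕ) (hn : Even n) :
    ∑ k ∈ Finset.range n, (-1 : ℚ) ^ k * f.eval (k : ℚ) =
      (-1 / 2 : ℚ) * (f.eval (n : ℚ) - f.eval 0) +
        (-1 / 2 : ℚ) * ∑ k ∈ Finset.range n, (-1 : ℚ) ^ k * (fdiff f).eval (k : ℚ) := by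
  have hshift : ∑ k ∈ Finset.range n, (-1 : ℚ) ^ k * f.eval ((k : ℚ) + 1) =
      f.eval 0 - f.eval (n : ℚ) - ∑ k ∈ Finset.range n, (-1 : ℚ) ^ k * f.eval (k : ℚ) := by
    have h1 : ∑ k ∈ Finset.range (n + 1), (-1 : ℚ) ^ k * f.eval (k : ℚ) =
        (∑ k ∈ Finset.range n, (-1 : ℚ) ^ (k + 1) * f.eval ((k : ℚ) + 1)) +
          (-1 : ℚ) ^ 0 * f.eval 0 := by
      rw [Finset.sum_range_succ' (fun k => (-1 : ℚ) ^ k * f.eval (k : ℚ))]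
      push_cast
      ring_nf
    have h2 : ∑ k ∈ Finset.range (n + 1), (-1 : ℚ) ^ k * f.eval (k : ℚ) =
        (∑ k ∈ Finset.range n, (-1 : ℚ) ^ k * f.eval (k : ℚ)) + (-1 : ℚ) ^ n * f.eval (n : ℚ) :=
      Finset.sum_range_succ _ n
    have hneg : (-1 : ℚ) ^ n = 1 := hn.neg_one_pow
    have h3 : ∑ k ∈ Finset.range n, (-1 : ℚ) ^ (k + 1) * f.eval ((k : ℚ) + 1) =
        -∑ k ∈ Finset.range n, (-1 : ℚ) ^ k * f.eval ((k : ℚ) + 1) := by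
      rw [← Finset.sum_neg_distrib]
      congr 1; ext k; ring
    rw [h1, h3, hneg] at h2
    linarith [h2]
  have : ∑ k ∈ Finset.range n, (-1 : ℚ) ^ k * (fdiff f).eval (k : ℚ) =
      ∑ k ∈ Finset.range n, ((-1 : ℚ) ^ k * f.eval ((k : ℚ) + 1) - (-1 : ℚ) ^ k * f.eval (k : ℚ)) := by
    congr 1; ext k; rw [fdiff_eval]; ring
  rw [this, Finset.sum_sub_distrib, hshift]
  ring

lemma euler_step (f : Polynomial ℚ) (n : ℕ) (hn : Even n) (m : ℕ) :
    ∑ k ∈ Finset.range n, (-1 : ℚ) ^ k * f.eval (k : ℚ) =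
      (∑ r ∈ Finset.Icc 1 m, ((-1 : ℚ) ^ r / 2 ^ r) *
          ((fdiff^[r - 1] f).eval (n : ℚ) - (fdiff^[r - 1] f).eval 0)) +
        (-1 / 2 : ℚ) ^ m * ∑ k ∈ Finset.range n, (-1 : ℚ) ^ k * (fdiff^[m] f).eval (k : ℚ) := by
  induction m with
  | zero => simp
  | succ m ih =>
    rw [ih, Finset.sum_Icc_succ_top (by omega : 1 ≤ m + 1)]
    rw [euler_key (fdiff^[m] f) n hn]
    rw [show m + 1 - 1 = m from rfl, Function.iterate_succ_apply']
    rw [show ((-1 : ℚ)) ^ (m + 1) / 2 ^ (m + 1) = (-1 / 2 : ℚ) ^ (m + 1) by rw [div_pow]]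
    rw [pow_succ]
    ring

/-- **Euler's summation method for alternating sums of polynomials**: if `f` has degree `d`,
then for every even natural number `n`,
`∑_{k=0}^{n-1} (-1)^k f(k) = ∑_{r=1}^{d+1} ((-1)^r/2^r) (Δ^{r-1} f(n) - Δ^{r-1} f(0))`. -/
theorem euler_alternating_sum_for_polynomials
    (f : Polynomial ℚ) (d : ℕ) (hd : f.natDegree = d)
    (n : ℕ) (hn : Even n) :
    ∑ k ∈ Finset.range n, (-1 : ℚ) ^ k * f.eval (k : ℚ) =
      ∑ r ∈ Finset.Icc 1 (d + 1),
        ((-1 : ℚ) ^ r / 2 ^ r) *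
          ((fdiff^[r - 1] f).eval (n : ℚ) - (fdiff^[r - 1] f).eval 0) := by
  have hz : fdiff^[d + 1] f = 0 := fdiff_iter_zero d f (le_of_eq hd)
  have := euler_step f n hn (d + 1)
  rw [hz] at this
  simpa using this
end
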